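/- Let a be a symmetric, continuous, coercive bilinear form on a real Hilbert space H with energy norm ||| · |||, F ∈ H', and let V₁, ..., V_m be closed subspaces of H with Galerkin solutions u_i ∈ V_i. Let V_H := ∩_i V_i with Galerkin solution u_H, and V_h a closed subspace containing all V_i with Galerkin solution u_h. Suppose norm equivalence |||u_h − u_H|||² ≃ Σ_{i=1}^m |||u_h − u_i|||² holds with equivalence constant C. Then using the Pythagoras identities |||u − u_H|||² = |||u − u_h|||² + |||u_h − u_H|||² and |||u − u_i|||² = |||u − u_h|||² + |||u_h − u_i|||², one obtains C^{-1}[E(V_H) − E(V_h)] ≤ Σ_{i=1}^m [E(V_i) − E(V_h)] ≤ C[E(V_H) − E(V_h)], where E(V) := ½|||u − u_V|||² for the Galerkin solution u_V on V. -/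

import Mathlib

/-!
Galerkin orthogonality of `u - u_h` against `V_h` turns every energy difference
`E(V) - E(V_h)` with `u_V ∈ V_h` into `½ |||u_h - u_V|||²` (Pythagoras), so the claim is the assumed
norm equivalence multiplied by `½`. Each `u_i` lies in `V_h`; so does `u_H`, because
`V_H ⊆ V_1 ⊆ V_h` when `m > 0`, while for `m = 0` the upper equivalence bound and coercivity
force `u_H = u_h`.
-/

section GalerkinEnergy

variable {E : Type*} [NormedAddCommGroup E] [NormedSpace ℝ E] (a : E →L[ℝ] E →L[ℝ] ℝ)

theorem galerkin_orthogonal {F : E →L[ℝ] ℝ} {u uW w : E} {W : Submodule ℝ E}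
    (hu : ∀ v, a u v = F v) (hGal : ∀ v ∈ W, a uW v = F v) (hw : w ∈ W) :
    a (u - uW) w = 0 := by
  rw [map_sub, sub_apply, hu w, hGal w hw, sub_self]

theorem energy_add_of_orthogonal (hsym : ∀ v w, a v w = a w v) {x y : E} (horth : a x y = 0) :
    a (x + y) (x + y) = a x x + a y y := by
  have horth' : a y x = 0 := by rw [hsym, horth]
  simp only [map_add, add_apply, horth, horth']
  ring

theorem galerkin_pythagoras (hsym : ∀ v w, a v w = a w v) {F : E →L[ℝ] ℝ} {u uW v : E}
    {W : Submodule ℝ E} (hu : ∀ v, a u v = F v) (hGal : ∀ v ∈ W, a uW v = F v)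
    (huW : uW ∈ W) (hv : v ∈ W) :
    a (u - v) (u - v) = a (u - uW) (u - uW) + a (uW - v) (uW - v) := by
  rw [← energy_add_of_orthogonal a hsym (galerkin_orthogonal a hu hGal (W.sub_mem huW hv)),
    sub_add_sub_cancel]

theorem eq_zero_of_coercive_of_nonpos {c : ℝ} (hc : 0 < c) (hcoer : ∀ v, c * ‖v‖ ^ 2 ≤ a v v)
    {v : E} (hv : a v v ≤ 0) : v = 0 := by
  have hsq : ‖v‖ ^ 2 ≤ 0 := nonpos_of_mul_nonpos_right ((hcoer v).trans hv) hc
  simpa using le_antisymm hsq (sq_nonneg _)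

end GalerkinEnergy

theorem stmt14_general {H : Type*} [NormedAddCommGroup H] [InnerProductSpace ℝ H]
    (a : H →L[ℝ] H →L[ℝ] ℝ) (hsym : ∀ v w, a v w = a w v)
    (c : ℝ) (hc : 0 < c) (hcoer : ∀ v, c * ‖v‖ ^ 2 ≤ a v v)
    (F : H →L[ℝ] ℝ) (u : H) (hu : ∀ v, a u v = F v)
    (m : ℕ) (V : Fin m → Submodule ℝ H)
    (ui : Fin m → H) (hui : ∀ i, ui i ∈ V i)
    (VH : Submodule ℝ H) (hVH : VH = ⨅ i, V i)
    (uH : H) (huH : uH ∈ VH)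
    (Vh : Submodule ℝ H) (hsub : ∀ i, V i ≤ Vh)
    (uh : H) (huh : uh ∈ Vh) (hGalh : ∀ v ∈ Vh, a uh v = F v)
    (C : ℝ) (hC : 0 < C)
    (hlow : C⁻¹ * (∑ i, a (uh - ui i) (uh - ui i)) ≤ a (uh - uH) (uh - uH))
    (hup : a (uh - uH) (uh - uH) ≤ C * ∑ i, a (uh - ui i) (uh - ui i)) :
    C⁻¹ * ((1 / 2) * a (u - uH) (u - uH) - (1 / 2) * a (u - uh) (u - uh))
        ≤ ∑ i, ((1 / 2) * a (u - ui i) (u - ui i) - (1 / 2) * a (u - uh) (u - uh))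
    ∧ ∑ i, ((1 / 2) * a (u - ui i) (u - ui i) - (1 / 2) * a (u - uh) (u - uh))
        ≤ C * ((1 / 2) * a (u - uH) (u - uH) - (1 / 2) * a (u - uh) (u - uh)) := by
  have henergy_sub : ∀ v ∈ Vh, (1 / 2) * a (u - v) (u - v) - (1 / 2) * a (u - uh) (u - uh)
      = (1 / 2) * a (uh - v) (uh - v) := by
    intro v hv
    rw [galerkin_pythagoras a hsym hu hGalh huh hv]
    ring
  have huH_mem : uH ∈ Vh := by
    rcases Nat.eq_zero_or_pos m with rfl | hm
    · have huh_eq : uh - uH = 0 := eq_zero_of_coercive_of_nonpos a hc hcoer (by simpa using hup)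
      rwa [← sub_eq_zero.mp huh_eq]
    · exact hsub ⟨0, hm⟩ (iInf_le V _ (hVH ▸ huH))
  rw [henergy_sub uH huH_mem,
    Finset.sum_congr rfl fun i _ => henergy_sub (ui i) (hsub i (hui i)), ← Finset.mul_sum]
  have hlow' : C⁻¹ * a (uh - uH) (uh - uH) ≤ ∑ i, a (uh - ui i) (uh - ui i) :=
    (inv_mul_le_iff₀ hC).2 hup
  have hup' : ∑ i, a (uh - ui i) (uh - ui i) ≤ C * a (uh - uH) (uh - uH) :=
    (inv_mul_le_iff₀ hC).1 hlow
  constructor <;> linarith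

theorem stmt14 {H : Type*} [NormedAddCommGroup H] [InnerProductSpace ℝ H] [CompleteSpace H]
    (a : H →L[ℝ] H →L[ℝ] ℝ) (hsym : ∀ v w, a v w = a w v)
    (c : ℝ) (hc : 0 < c) (hcoer : ∀ v, c * ‖v‖ ^ 2 ≤ a v v)
    (F : H →L[ℝ] ℝ) (u : H) (hu : ∀ v, a u v = F v)
    (m : ℕ) (V : Fin m → Submodule ℝ H) (hV : ∀ i, IsClosed ((V i : Set H)))
    (ui : Fin m → H) (hui : ∀ i, ui i ∈ V i) (hGali : ∀ i, ∀ v ∈ V i, a (ui i) v = F v)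
    (VH : Submodule ℝ H) (hVH : VH = ⨅ i, V i)
    (uH : H) (huH : uH ∈ VH) (hGalH : ∀ v ∈ VH, a uH v = F v)
    (Vh : Submodule ℝ H) (hVhcl : IsClosed ((Vh : Set H))) (hsub : ∀ i, V i ≤ Vh)
    (uh : H) (huh : uh ∈ Vh) (hGalh : ∀ v ∈ Vh, a uh v = F v)
    (C : ℝ) (hC : 0 < C)
    (hlow : C⁻¹ * (∑ i, a (uh - ui i) (uh - ui i)) ≤ a (uh - uH) (uh - uH))
    (hup : a (uh - uH) (uh - uH) ≤ C * ∑ i, a (uh - ui i) (uh - ui i)) :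
    C⁻¹ * ((1 / 2) * a (u - uH) (u - uH) - (1 / 2) * a (u - uh) (u - uh))
        ≤ ∑ i, ((1 / 2) * a (u - ui i) (u - ui i) - (1 / 2) * a (u - uh) (u - uh))
    ∧ ∑ i, ((1 / 2) * a (u - ui i) (u - ui i) - (1 / 2) * a (u - uh) (u - uh))
        ≤ C * ((1 / 2) * a (u - uH) (u - uH) - (1 / 2) * a (u - uh) (u - uh)) :=
  stmt14_general a hsym c hc hcoer F u hu m V ui hui VH hVH uH huH Vh hsub uh huh hGalh C hC hlow
    hup
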